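/- arXiv:1610.03972 — 2 statements merged into one kernel-verified Lean document; each statement's English description precedes it below -/
import Mathlib

section
/- If G is a connected graph in class W_2 with G ≠ K_2, then for every vertex v of G there exist two disjoint maximum independent sets S_1, S_2 of G with v ∉ S_1 ∪ S_2; in particular, |V(G)| ≥ 2α(G) + 1. -/
/-! If `v` has two neighbours `u ≠ w`, extend `{u}` and `{w}` to disjoint maximum independent
sets; neither can contain `v`. A maximum independent set contains every vertex with no neighbour
in it, so a W₂ graph has no isolated vertex (it would lie in both sets of a disjoint pair). For
the same reason, if `v` is a leaf with neighbour `u`, then `u` has no other neighbour `w`: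
extending `{v}` and `{w}` gives a maximum independent set containing `w`, hence avoiding `u`,
hence containing `v`, which the other set already contains. A connected graph consisting of two
adjacent leaves is `K₂`. -/

open Finset

/-- A finset of vertices is independent: no two of its members are adjacent. -/
def IndepSet {V : Type*} (G : SimpleGraph V) (A : Finset V) : Prop :=
  ∀ u ∈ A, ∀ v ∈ A, ¬ G.Adj u v

open scoped Classical in
/-- Maximum size of an independent set contained in `s` (independence number of `G[s]`). -/
noncomputable def alphaOn {V : Type*} [Fintype V] (G : SimpleGraph V) (s : Finset V) : ℕ :=
  ((s.powerset).filter (fun A => IndepSet G A)).sup Finset.card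

/-- The independence number of `G`. -/
noncomputable def alpha {V : Type*} [Fintype V] (G : SimpleGraph V) : ℕ :=
  alphaOn G Finset.univ

/-- The induced subgraph `G[s]` is well-covered: every maximal independent subset of `s`
has maximum cardinality. -/
def WellCoveredOn {V : Type*} [Fintype V] (G : SimpleGraph V) (s : Finset V) : Prop :=
  ∀ A ⊆ s, IndepSet G A →
    (∀ B ⊆ s, IndepSet G B → A ⊆ B → A = B) → A.card = alphaOn G s

/-- `G` is well-covered. -/
def WellCovered {V : Type*} [Fintype V] (G : SimpleGraph V) : Prop :=
  WellCoveredOn G Finset.univ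

open scoped Classical in
/-- The open neighborhood `N(A)`: vertices having a neighbor in `A`. -/
noncomputable def nbhd {V : Type*} [Fintype V] (G : SimpleGraph V) (A : Finset V) : Finset V :=
  Finset.univ.filter (fun v => ∃ u ∈ A, G.Adj u v)

/-- The closed neighborhood `N[A] = A ∪ N(A)`. -/
noncomputable def closedNbhd {V : Type*} [Fintype V] [DecidableEq V] (G : SimpleGraph V) (A : Finset V) :
    Finset V :=
  A ∪ nbhd G A

/-- The induced subgraph `G[s]` is in class `W₂`: every two disjoint independent subsets of `s`
extend to two disjoint maximum independent subsets of `s`. -/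
def W2On {V : Type*} [Fintype V] (G : SimpleGraph V) (s : Finset V) : Prop :=
  ∀ A ⊆ s, ∀ B ⊆ s, IndepSet G A → IndepSet G B → Disjoint A B →
    ∃ S₁ ⊆ s, ∃ S₂ ⊆ s, IndepSet G S₁ ∧ IndepSet G S₂ ∧
      S₁.card = alphaOn G s ∧ S₂.card = alphaOn G s ∧ Disjoint S₁ S₂ ∧ A ⊆ S₁ ∧ B ⊆ S₂

/-- `G` belongs to class `W₂`. -/
def W2 {V : Type*} [Fintype V] (G : SimpleGraph V) : Prop :=
  W2On G Finset.univ

section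

variable {V : Type*}

lemma indepSet_empty (G : SimpleGraph V) : IndepSet G ∅ := by
  simp [IndepSet]

lemma indepSet_singleton (G : SimpleGraph V) (a : V) : IndepSet G {a} := by
  simp [IndepSet]

lemma IndepSet.insert [DecidableEq V] {G : SimpleGraph V} {S : Finset V} (hS : IndepSet G S)
    {v : V} (hv : ∀ u ∈ S, ¬ G.Adj v u) : IndepSet G (insert v S) := by
  intro a ha b hb
  rcases mem_insert.mp ha with rfl | haS
  · rcases mem_insert.mp hb with rfl | hbS
    · exact G.irrefl
    · exact hv b hbS
  · rcases mem_insert.mp hb with rfl | hbS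
    · exact fun hab => hv a haS hab.symm
    · exact hS a haS b hbS

lemma IndepSet.card_le_alpha [Fintype V] {G : SimpleGraph V} {S : Finset V}
    (hS : IndepSet G S) : S.card ≤ alpha G := by
  classical
  exact le_sup (f := Finset.card) (by simpa [mem_filter] using hS)

lemma IndepSet.mem_of_card_eq_alpha [Fintype V] {G : SimpleGraph V} {S : Finset V}
    (hS : IndepSet G S) (hcard : S.card = alpha G) {v : V} (hv : ∀ u ∈ S, ¬ G.Adj v u) :
    v ∈ S := by
  classical
  by_contra hvS
  have := (hS.insert hv).card_le_alpha
  rw [card_insert_of_notMem hvS] at this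
  omega

lemma W2.exists_adj [Fintype V] {G : SimpleGraph V} (h : W2 G) (v : V) : ∃ u, G.Adj v u := by
  by_contra! hv
  obtain ⟨S₁, -, S₂, -, hS₁, hS₂, hc₁, hc₂, hdisj, -, -⟩ :=
    h ∅ (empty_subset _) ∅ (empty_subset _) (indepSet_empty G) (indepSet_empty G)
      (disjoint_empty_left ∅)
  exact disjoint_left.mp hdisj (hS₁.mem_of_card_eq_alpha hc₁ fun u _ => hv u)
    (hS₂.mem_of_card_eq_alpha hc₂ fun u _ => hv u)

lemma W2.eq_of_adj_of_forall_adj_eq [Fintype V] {G : SimpleGraph V} (h : W2 G) {v u : V}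
    (hv : ∀ x, G.Adj v x → x = u) {w : V} (huw : G.Adj u w) : w = v := by
  by_contra hwv
  obtain ⟨T₁, -, T₂, -, -, hT₂, -, hc₂, hdisj, hvT₁, hwT₂⟩ :=
    h {v} (subset_univ _) {w} (subset_univ _) (indepSet_singleton G v) (indepSet_singleton G w)
      (disjoint_singleton.mpr (Ne.symm hwv))
  have hw : w ∈ T₂ := hwT₂ (mem_singleton_self w)
  have hvT₂ : v ∈ T₂ := hT₂.mem_of_card_eq_alpha hc₂ fun x hx hvx =>
    hT₂ w hw x hx (hv x hvx ▸ huw.symm)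
  exact disjoint_left.mp hdisj (hvT₁ (mem_singleton_self v)) hvT₂

lemma W2.exists_disjoint_notMem_of_adj [Fintype V] [DecidableEq V] {G : SimpleGraph V}
    (h : W2 G) {v u w : V} (hu : G.Adj v u) (hw : G.Adj v w) (huw : u ≠ w) :
    ∃ S₁ S₂ : Finset V, IndepSet G S₁ ∧ IndepSet G S₂ ∧
      S₁.card = alpha G ∧ S₂.card = alpha G ∧ Disjoint S₁ S₂ ∧ v ∉ S₁ ∪ S₂ := by
  obtain ⟨S₁, -, S₂, -, hS₁, hS₂, hc₁, hc₂, hdisj, huS₁, hwS₂⟩ :=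
    h {u} (subset_univ _) {w} (subset_univ _) (indepSet_singleton G u) (indepSet_singleton G w)
      (disjoint_singleton.mpr huw)
  refine ⟨S₁, S₂, hS₁, hS₂, hc₁, hc₂, hdisj, ?_⟩
  intro hv
  rcases mem_union.mp hv with hv | hv
  · exact hS₁ v hv u (huS₁ (mem_singleton_self u)) hu
  · exact hS₂ v hv w (hwS₂ (mem_singleton_self w)) hw

lemma SimpleGraph.Walk.mem_of_adj_closed {G : SimpleGraph V} {s : Set V}
    (hs : ∀ x y, G.Adj x y → x ∈ s → y ∈ s) {a b : V} (p : G.Walk a b) (ha : a ∈ s) : b ∈ s := by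
  induction p with
  | nil => exact ha
  | cons hadj _ ih => exact ih (hs _ _ hadj ha)

lemma SimpleGraph.Connected.nonempty_iso_top_fin_two [DecidableEq V] {G : SimpleGraph V}
    (hconn : G.Connected) {u v : V} (huv : G.Adj u v) (hu : ∀ x, G.Adj u x → x = v)
    (hv : ∀ x, G.Adj v x → x = u) :
    Nonempty (G ≃g (⊤ : SimpleGraph (Fin 2))) := by
  have hall : ∀ x, x = u ∨ x = v := fun x =>
    (hconn.preconnected u x).some.mem_of_adj_closed (s := {x | x = u ∨ x = v})
      (by
        rintro x y hxy (rfl | rfl)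
        · exact Or.inr (hu y hxy)
        · exact Or.inl (hv y hxy)) (Or.inl rfl)
  have htop : G = ⊤ := by
    ext x y
    rcases hall x with rfl | rfl <;> rcases hall y with rfl | rfl <;>
      simp [huv, huv.symm, huv.ne, huv.ne.symm]
  have hcard : Fintype.card ({u, v} : Finset V) = 2 := by
    rw [Fintype.card_coe, card_pair huv.ne]
  let e : V ≃ Fin 2 := (Equiv.subtypeUnivEquiv fun x => by
    rcases hall x with rfl | rfl <;> simp).symm.trans (Fintype.equivFinOfCardEq hcard)
  exact ⟨htop ▸ SimpleGraph.Iso.completeGraph e⟩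

end

/-- In a connected W₂ graph other than K₂, every vertex avoids two disjoint maximum
independent sets; in particular |V(G)| ≥ 2α(G) + 1. -/
theorem stmt5 {V : Type*} [Fintype V] [DecidableEq V] (G : SimpleGraph V)
    (hconn : G.Connected) (hK2 : ¬ Nonempty (G ≃g (⊤ : SimpleGraph (Fin 2))))
    (h : W2 G) :
    (∀ v : V, ∃ S₁ S₂ : Finset V, IndepSet G S₁ ∧ IndepSet G S₂ ∧
      S₁.card = alpha G ∧ S₂.card = alpha G ∧ Disjoint S₁ S₂ ∧ v ∉ S₁ ∪ S₂) ∧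
    2 * alpha G + 1 ≤ Fintype.card V := by
  have avoid : ∀ v : V, ∃ S₁ S₂ : Finset V, IndepSet G S₁ ∧ IndepSet G S₂ ∧
      S₁.card = alpha G ∧ S₂.card = alpha G ∧ Disjoint S₁ S₂ ∧ v ∉ S₁ ∪ S₂ := by
    intro v
    obtain ⟨u, hu⟩ := h.exists_adj v
    by_cases hleaf : ∀ w, G.Adj v w → w = u
    · exact (hK2 (hconn.nonempty_iso_top_fin_two hu hleaf
        fun w huw => h.eq_of_adj_of_forall_adj_eq hleaf huw)).elim
    · push Not at hleaf
      obtain ⟨w, hw, hwu⟩ := hleaf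
      exact h.exists_disjoint_notMem_of_adj hu hw (Ne.symm hwu)
  refine ⟨avoid, ?_⟩
  obtain ⟨v⟩ := hconn.nonempty
  obtain ⟨S₁, S₂, -, -, hc₁, hc₂, hdisj, hv⟩ := avoid v
  calc 2 * alpha G + 1 = (insert v (S₁ ∪ S₂)).card := by
        rw [card_insert_of_notMem hv, card_union_of_disjoint hdisj, hc₁, hc₂]; ring
    _ ≤ Fintype.card V := card_le_univ _
end

section
/- If G is a connected graph in class W_2 with G ≠ K_2, then α(G) = α(G − S) for every independent set S of G, where G − S is the subgraph induced on V(G) \ S. -/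
open Finset

section

variable {V : Type*} [Fintype V] {G : SimpleGraph V}

theorem card_le_alphaOn {s A : Finset V} (hAs : A ⊆ s) (hA : IndepSet G A) :
    A.card ≤ alphaOn G s := by
  classical
  exact le_sup (f := card) (mem_filter.mpr ⟨mem_powerset.mpr hAs, hA⟩)

theorem alphaOn_mono {s t : Finset V} (hst : s ⊆ t) : alphaOn G s ≤ alphaOn G t := by
  classical
  refine Finset.sup_le fun A hA => ?_
  obtain ⟨hAs, hA⟩ := mem_filter.mp hA
  exact card_le_alphaOn ((mem_powerset.mp hAs).trans hst) hA

-- Apply W₂ to the pair `A`, `∅`: the set extending `∅` avoids the one extending `A`.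
theorem W2On.exists_maximum_disjoint {s A : Finset V} (h : W2On G s) (hAs : A ⊆ s)
    (hA : IndepSet G A) : ∃ B ⊆ s, IndepSet G B ∧ B.card = alphaOn G s ∧ Disjoint A B := by
  obtain ⟨S₁, -, S₂, hS₂s, -, hS₂, -, hcard, hdisj, hAS₁, -⟩ :=
    h A hAs ∅ (empty_subset s) hA (by simp [IndepSet]) (disjoint_empty_right A)
  exact ⟨S₂, hS₂s, hS₂, hcard, hdisj.mono_left hAS₁⟩

theorem W2On.alphaOn_sdiff [DecidableEq V] {s A : Finset V} (h : W2On G s) (hAs : A ⊆ s)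
    (hA : IndepSet G A) : alphaOn G (s \ A) = alphaOn G s := by
  refine le_antisymm (alphaOn_mono sdiff_subset) ?_
  obtain ⟨B, hBs, hB, hcard, hdisj⟩ := h.exists_maximum_disjoint hAs hA
  calc alphaOn G s = B.card := hcard.symm
    _ ≤ alphaOn G (s \ A) := card_le_alphaOn (subset_sdiff.mpr ⟨hBs, hdisj.symm⟩) hB

end

theorem stmt8_general {V : Type*} [Fintype V] [DecidableEq V] (G : SimpleGraph V)
    (h : W2 G) :
    ∀ S : Finset V, IndepSet G S → alphaOn G (Finset.univ \ S) = alpha G :=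
  fun S hS => h.alphaOn_sdiff (subset_univ S) hS

/-- In a connected W₂ graph other than K₂, α(G) = α(G - S) for every independent set S. -/
theorem stmt8 {V : Type*} [Fintype V] [DecidableEq V] (G : SimpleGraph V)
    (hconn : G.Connected) (hK2 : ¬ Nonempty (G ≃g (⊤ : SimpleGraph (Fin 2))))
    (h : W2 G) :
    ∀ S : Finset V, IndepSet G S → alphaOn G (Finset.univ \ S) = alpha G :=
  stmt8_general G h
end
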